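/- arXiv:2605.30749 — 2 statements merged into one kernel-verified Lean document; each statement's English description precedes it below -/
import Mathlib

section
/- Discounted visitation difference bound: under the assumptions of the step-t coupling bound, the discounted state visitation measures ρ_π = Σ_{t≥0} γ^t d_t^π and ρ_{π̃} = Σ_{t≥0} γ^t d_t^{π̃} satisfy ‖ρ_π − ρ_{π̃}‖₁ ≤ 2γ δ_TV / (1−γ)². -/
/-!
With `K_π` the one-step kernel of the chain under policy `π`,
`D_{t+1}^π - D_{t+1}^π̃ = K_π (D_t^π - D_t^π̃) + (K_π - K_π̃) D_t^π̃`. A Markov kernel does not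
increase the `ℓ¹` norm, and the second term has `ℓ¹` norm at most
`∑_s D_t^π̃(s) ‖π(·|s) - π̃(·|s)‖₁ ≤ 2δ`. Hence `‖D_t^π - D_t^π̃‖₁ ≤ 2δt`, and summing against
`γ^t` gives `2δ ∑_t t γ^t = 2γδ / (1 - γ)²`.
-/

open scoped BigOperators

/-- The time-`t` state distribution of a finite MDP with transition kernel `p`,
policy `π` and initial distribution `d0`. -/
noncomputable def stateDist {SS AA : Type} [Fintype SS] [Fintype AA]
    (p : SS → AA → SS → ℝ) (π : SS → AA → ℝ) (d0 : SS → ℝ) : ℕ → SS → ℝ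
  | 0 => d0
  | (t + 1) => fun s' => ∑ s, ∑ a, stateDist p π d0 t s * π s a * p s a s'

open Finset

lemma sum_abs_sum_mul_le_sum_abs {ι κ : Type*} [Fintype ι] [Fintype κ] (f : ι → ℝ)
    {K : ι → κ → ℝ} (hK : ∀ i, K i ∈ stdSimplex ℝ κ) :
    ∑ k, |∑ i, f i * K i k| ≤ ∑ i, |f i| :=
  calc ∑ k, |∑ i, f i * K i k|
      ≤ ∑ k, ∑ i, |f i| * K i k := by
        gcongr with k
        refine (abs_sum_le_sum_abs _ _).trans_eq (sum_congr rfl fun i _ => ?_)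
        rw [abs_mul, abs_of_nonneg ((hK i).1 k)]
    _ = ∑ i, |f i| := by
        rw [sum_comm]
        simp only [← mul_sum, (hK _).2, mul_one]

lemma summable_geometric_mul_of_abs_le_one {γ : ℝ} (hγ0 : 0 ≤ γ) (hγ1 : γ < 1) {x : ℕ → ℝ}
    (hx : ∀ t, |x t| ≤ 1) : Summable fun t => γ ^ t * x t :=
  (summable_geometric_of_lt_one hγ0 hγ1).of_norm_bounded fun t => by
    rw [Real.norm_eq_abs, abs_mul, abs_of_nonneg (pow_nonneg hγ0 t)]
    exact mul_le_of_le_one_right (pow_nonneg hγ0 t) (hx t)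

lemma sum_abs_tsum_sub_le {ι : Type*} [Fintype ι] {f g : ℕ → ι → ℝ} {γ c : ℝ}
    (hγ0 : 0 ≤ γ) (hγ1 : γ < 1) (hf : ∀ i, Summable fun t => γ ^ t * f t i)
    (hg : ∀ i, Summable fun t => γ ^ t * g t i) (hfg : ∀ t, ∑ i, |f t i - g t i| ≤ c * t) :
    ∑ i, |∑' t, γ ^ t * f t i - ∑' t, γ ^ t * g t i| ≤ c * γ / (1 - γ) ^ 2 := by
  have hγ : ‖γ‖ < 1 := by rwa [Real.norm_of_nonneg hγ0]
  have hterm : ∀ t i, ‖γ ^ t * f t i - γ ^ t * g t i‖ = γ ^ t * |f t i - g t i| := fun t i => by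
    rw [Real.norm_eq_abs, ← mul_sub, abs_mul, abs_of_nonneg (pow_nonneg hγ0 t)]
  have habs : ∀ i, Summable fun t => γ ^ t * |f t i - g t i| := fun i =>
    ((hf i).sub (hg i)).norm.congr (hterm · i)
  have hmoment : Summable fun t : ℕ => c * ((t : ℝ) * γ ^ t) := by
    simpa using (summable_pow_mul_geometric_of_norm_lt_one 1 hγ).mul_left c
  calc ∑ i, |∑' t, γ ^ t * f t i - ∑' t, γ ^ t * g t i|
      ≤ ∑ i, ∑' t, γ ^ t * |f t i - g t i| := by
        gcongr with i
        rw [← (hf i).tsum_sub (hg i), ← Real.norm_eq_abs]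
        exact (norm_tsum_le_tsum_norm ((hf i).sub (hg i)).norm).trans_eq
          (tsum_congr (hterm · i))
    _ = ∑' t, γ ^ t * ∑ i, |f t i - g t i| := by
        rw [← Summable.tsum_finsetSum fun i _ => habs i]
        simp only [mul_sum]
    _ ≤ ∑' t : ℕ, c * ((t : ℝ) * γ ^ t) := by
        refine Summable.tsum_le_tsum (fun t => ?_) ?_ hmoment
        · calc γ ^ t * ∑ i, |f t i - g t i| ≤ γ ^ t * (c * t) :=
                mul_le_mul_of_nonneg_left (hfg t) (pow_nonneg hγ0 t)
            _ = c * (t * γ ^ t) := by ring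
        · simpa only [mul_sum] using summable_sum fun i _ => habs i
    _ = c * γ / (1 - γ) ^ 2 := by
        rw [tsum_mul_left, tsum_coe_mul_geometric_of_norm_lt_one hγ, mul_div_assoc]

section MDP

variable {S A : Type} [Fintype S] [Fintype A] (p : S → A → S → ℝ)

noncomputable def nextStateDist (π : S → A → ℝ) (μ : S → ℝ) : S → ℝ :=
  fun s' => ∑ s, ∑ a, μ s * π s a * p s a s'

variable {p}

lemma nextStateDist_mem_stdSimplex (hp : ∀ s a, p s a ∈ stdSimplex ℝ S) {π : S → A → ℝ}
    (hπ : ∀ s, π s ∈ stdSimplex ℝ A) {μ : S → ℝ} (hμ : μ ∈ stdSimplex ℝ S) :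
    nextStateDist p π μ ∈ stdSimplex ℝ S := by
  refine ⟨fun s' => ?_, ?_⟩
  · exact sum_nonneg fun s _ => sum_nonneg fun a _ =>
      mul_nonneg (mul_nonneg (hμ.1 s) ((hπ s).1 a)) ((hp s a).1 s')
  · simp only [nextStateDist]
    rw [sum_comm, ← hμ.2]
    refine sum_congr rfl fun s _ => ?_
    rw [sum_comm]
    simp only [← mul_sum, (hp s _).2, mul_one, (hπ s).2]

lemma sum_abs_nextStateDist_sub_le (hp : ∀ s a, p s a ∈ stdSimplex ℝ S) {π π' : S → A → ℝ}
    (hπ : ∀ s, π s ∈ stdSimplex ℝ A) (μ ν : S → ℝ) :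
    ∑ s', |nextStateDist p π μ s' - nextStateDist p π' ν s'| ≤
      ∑ s, |μ s - ν s| + ∑ s, |ν s| * ∑ a, |π s a - π' s a| := by
  set c : S × A → ℝ := fun x => (μ x.1 - ν x.1) * π x.1 x.2 + ν x.1 * (π x.1 x.2 - π' x.1 x.2)
  have hdiff : ∀ s', nextStateDist p π μ s' - nextStateDist p π' ν s' =
      ∑ x : S × A, c x * p x.1 x.2 s' := by
    intro s'
    simp only [nextStateDist, c, Fintype.sum_prod_type, ← sum_sub_distrib]
    exact sum_congr rfl fun s _ => sum_congr rfl fun a _ => by ring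
  calc ∑ s', |nextStateDist p π μ s' - nextStateDist p π' ν s'|
      ≤ ∑ x : S × A, |c x| := by
        simp only [hdiff]
        exact sum_abs_sum_mul_le_sum_abs c fun x => hp x.1 x.2
    _ ≤ ∑ s, ∑ a, (|μ s - ν s| * π s a + |ν s| * |π s a - π' s a|) := by
        rw [Fintype.sum_prod_type]
        gcongr with s _ a
        refine (abs_add_le _ _).trans_eq ?_
        rw [abs_mul, abs_mul, abs_of_nonneg ((hπ s).1 a)]
    _ = ∑ s, |μ s - ν s| + ∑ s, |ν s| * ∑ a, |π s a - π' s a| := by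
        simp only [sum_add_distrib, ← mul_sum, (hπ _).2, mul_one]

variable {d0 : S → ℝ}

lemma stateDist_succ (π : S → A → ℝ) (t : ℕ) :
    stateDist p π d0 (t + 1) = nextStateDist p π (stateDist p π d0 t) := rfl

lemma stateDist_mem_stdSimplex (hp : ∀ s a, p s a ∈ stdSimplex ℝ S) {π : S → A → ℝ}
    (hπ : ∀ s, π s ∈ stdSimplex ℝ A) (hd0 : d0 ∈ stdSimplex ℝ S) (t : ℕ) :
    stateDist p π d0 t ∈ stdSimplex ℝ S := by
  induction t with
  | zero => exact hd0
  | succ t ih => exact nextStateDist_mem_stdSimplex hp hπ ih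

lemma sum_abs_stateDist_sub_le (hp : ∀ s a, p s a ∈ stdSimplex ℝ S) {π π' : S → A → ℝ}
    (hπ : ∀ s, π s ∈ stdSimplex ℝ A) (hπ' : ∀ s, π' s ∈ stdSimplex ℝ A)
    (hd0 : d0 ∈ stdSimplex ℝ S) {δ : ℝ} (hTV : ∀ s, (1 / 2) * ∑ a, |π s a - π' s a| ≤ δ)
    (t : ℕ) :
    ∑ s, |stateDist p π d0 t s - stateDist p π' d0 t s| ≤ 2 * δ * t := by
  induction t with
  | zero => simp [stateDist]
  | succ t ih =>
    have hν := stateDist_mem_stdSimplex hp hπ' hd0 t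
    have hpolicy : ∑ s, |stateDist p π' d0 t s| * ∑ a, |π s a - π' s a| ≤ 2 * δ :=
      calc ∑ s, |stateDist p π' d0 t s| * ∑ a, |π s a - π' s a|
          ≤ ∑ s, stateDist p π' d0 t s * (2 * δ) := by
            gcongr with s
            · exact hν.1 s
            · rw [abs_of_nonneg (hν.1 s)]
            · linarith [hTV s]
        _ = 2 * δ := by rw [← sum_mul, hν.2, one_mul]
    rw [stateDist_succ, stateDist_succ]
    refine (sum_abs_nextStateDist_sub_le hp hπ _ _).trans ?_
    push_cast
    linarith

lemma summable_geometric_mul_stateDist {γ : ℝ} (hγ0 : 0 ≤ γ) (hγ1 : γ < 1)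
    (hp : ∀ s a, p s a ∈ stdSimplex ℝ S) {π : S → A → ℝ} (hπ : ∀ s, π s ∈ stdSimplex ℝ A)
    (hd0 : d0 ∈ stdSimplex ℝ S) (s : S) :
    Summable fun t => γ ^ t * stateDist p π d0 t s :=
  summable_geometric_mul_of_abs_le_one hγ0 hγ1 fun t => by
    obtain ⟨h0, h1⟩ := mem_Icc_of_mem_stdSimplex (stateDist_mem_stdSimplex hp hπ hd0 t) s
    exact abs_le.2 ⟨by linarith, h1⟩

end MDP

theorem discounted_visitation_bound_general {SS AA : Type} [Fintype SS] [Fintype AA]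
    (p : SS → AA → SS → ℝ) (π πt : SS → AA → ℝ) (d0 : SS → ℝ) (δTV γ : ℝ)
    (hp : ∀ s a, (∀ s', 0 ≤ p s a s') ∧ ∑ s', p s a s' = 1)
    (hπ : ∀ s, (∀ a, 0 ≤ π s a) ∧ ∑ a, π s a = 1)
    (hπt : ∀ s, (∀ a, 0 ≤ πt s a) ∧ ∑ a, πt s a = 1)
    (hd0 : (∀ s, 0 ≤ d0 s) ∧ ∑ s, d0 s = 1)
    (hγ0 : 0 ≤ γ) (hγ1 : γ < 1)
    (hTV : ∀ s, (1 / 2) * ∑ a, |π s a - πt s a| ≤ δTV) :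
    (∑ s, |(∑' t : ℕ, γ ^ t * stateDist p π d0 t s) -
        ∑' t : ℕ, γ ^ t * stateDist p πt d0 t s|) ≤
      2 * γ * δTV / (1 - γ) ^ 2 := by
  calc _ ≤ 2 * δTV * γ / (1 - γ) ^ 2 :=
        sum_abs_tsum_sub_le hγ0 hγ1 (summable_geometric_mul_stateDist hγ0 hγ1 hp hπ hd0)
          (summable_geometric_mul_stateDist hγ0 hγ1 hp hπt hd0)
          (sum_abs_stateDist_sub_le hp hπ hπt hd0 hTV)
    _ = 2 * γ * δTV / (1 - γ) ^ 2 := by ring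

/-- Discounted visitation difference bound: `‖ρ_π − ρ_π̃‖₁ ≤ 2γ δTV / (1−γ)²`, where
`ρ_π(s) = ∑_{t≥0} γ^t d_t^π(s)` and `δTV` bounds the statewise total variation between
the two policies. -/
theorem discounted_visitation_bound {SS AA : Type} [Fintype SS] [Fintype AA]
    (p : SS → AA → SS → ℝ) (π πt : SS → AA → ℝ) (d0 : SS → ℝ) (δTV γ : ℝ)
    (hp : ∀ s a, (∀ s', 0 ≤ p s a s') ∧ ∑ s', p s a s' = 1)
    (hπ : ∀ s, (∀ a, 0 ≤ π s a) ∧ ∑ a, π s a = 1)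
    (hπt : ∀ s, (∀ a, 0 ≤ πt s a) ∧ ∑ a, πt s a = 1)
    (hd0 : (∀ s, 0 ≤ d0 s) ∧ ∑ s, d0 s = 1)
    (hδ0 : 0 ≤ δTV) (hδ1 : δTV ≤ 1)
    (hγ0 : 0 ≤ γ) (hγ1 : γ < 1)
    (hTV : ∀ s, (1 / 2) * ∑ a, |π s a - πt s a| ≤ δTV) :
    (∑ s, |(∑' t : ℕ, γ ^ t * stateDist p π d0 t s) -
        ∑' t : ℕ, γ ^ t * stateDist p πt d0 t s|) ≤
      2 * γ * δTV / (1 - γ) ^ 2 :=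
  discounted_visitation_bound_general p π πt d0 δTV γ hp hπ hπt hd0 hγ0 hγ1 hTV
end

section
/- Soft Q-function closeness between a Gaussian-smoothed policy and its base policy: let π̃ be a base policy and π its composition with small Gaussian noise, with statewise total variation δ_TV. Let Q^π be the fixed point of the cross-entropy-regularized soft Bellman operator (with bonus −α log π̃ under π) and Q^{π̃} the fixed point of the entropy-regularized soft Bellman operator under π̃. Assume |log π̃(a|s)| ≤ C_R and rewards are bounded so ‖Q^{π̃}‖_∞ ≤ R_max/(1−γ). Then ‖Q^π − Q^{π̃}‖_∞ ≤ (2δ_TV/(1−γ)) (αC_R + γ‖Q^{π̃}‖_∞). -/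
/-!
Write `Δ = Qπ - Qπt`. Both functions are fixed points of soft Bellman operators with the same
rewards and transitions, so `Δ s a` is `γ` times an average over `s'` of the difference of the two
regularized next-state values. Since the cross-entropy bonus is linear in the policy, both values
have the form `∑ a', μ s' a' * (α * (-log πt s' a') + Q s' a')`, and their difference splits as
`∑ π (Qπ - Qπt)`, at most `‖Δ‖_∞`, plus `∑ (π - πt) (α * (-log πt) + Qπt)`, at most
`2 δTV (α CR + M)`. Hence `‖Δ‖_∞ ≤ γ (‖Δ‖_∞ + 2 δTV (α CR + M))`, and solving for `‖Δ‖_∞` gives the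
claim.
-/

open Finset

section FiniteSums

variable {ι : Type*} [Fintype ι]

lemma abs_sum_mul_le_of_stochastic {w f : ι → ℝ} {C : ℝ} (hw : (∀ i, 0 ≤ w i) ∧ ∑ i, w i = 1)
    (hf : ∀ i, |f i| ≤ C) : |∑ i, w i * f i| ≤ C :=
  calc |∑ i, w i * f i| ≤ ∑ i, |w i * f i| := abs_sum_le_sum_abs _ _
    _ ≤ ∑ i, w i * C := by
        gcongr with i
        rw [abs_mul, abs_of_nonneg (hw.1 i)]
        exact mul_le_mul_of_nonneg_left (hf i) (hw.1 i)
    _ = C := by rw [← sum_mul, hw.2, one_mul]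

lemma abs_sum_sub_mul_le {μ ν f : ι → ℝ} {C : ℝ} (hf : ∀ i, |f i| ≤ C) :
    |∑ i, (μ i - ν i) * f i| ≤ (∑ i, |μ i - ν i|) * C :=
  calc |∑ i, (μ i - ν i) * f i| ≤ ∑ i, |(μ i - ν i) * f i| := abs_sum_le_sum_abs _ _
    _ ≤ ∑ i, |μ i - ν i| * C := by
        gcongr with i
        rw [abs_mul]
        exact mul_le_mul_of_nonneg_left (hf i) (abs_nonneg _)
    _ = (∑ i, |μ i - ν i|) * C := (sum_mul _ _ _).symm

lemma abs_sum_mul_sub_sum_mul_le {μ ν f g : ι → ℝ} {C D : ℝ}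
    (hμ : (∀ i, 0 ≤ μ i) ∧ ∑ i, μ i = 1) (hfg : ∀ i, |f i - g i| ≤ D) (hg : ∀ i, |g i| ≤ C) :
    |∑ i, μ i * f i - ∑ i, ν i * g i| ≤ D + (∑ i, |μ i - ν i|) * C := by
  have hsplit : ∑ i, μ i * f i - ∑ i, ν i * g i
      = ∑ i, μ i * (f i - g i) + ∑ i, (μ i - ν i) * g i := by
    simp only [mul_sub, sub_mul, sum_sub_distrib]
    ring
  rw [hsplit]
  exact (abs_add_le _ _).trans
    (add_le_add (abs_sum_mul_le_of_stochastic hμ hfg) (abs_sum_sub_mul_le hg))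

end FiniteSums

section SoftBellman

variable {S A : Type*} [Fintype S] [Fintype A]

/-- `b` is the regularization bonus collected at the next state: the paper's cross-entropy and
entropy operators take `b s = α * ∑ a, μ s a * (-log π̃ s a)` with `μ = π`, resp. `μ = π̃`. -/
def softBellman (r : S → A → ℝ) (P : S → A → S → ℝ) (γ : ℝ) (b : S → ℝ) (μ : S → A → ℝ)
    (Q : S → A → ℝ) (s : S) (a : A) : ℝ :=
  r s a + γ * ∑ s', P s a s' * (b s' + ∑ a', μ s' a' * Q s' a')

lemma abs_softBellman_sub_softBellman_le {r : S → A → ℝ} {P : S → A → S → ℝ} {γ C : ℝ}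
    {b b' : S → ℝ} {μ ν Q Q' : S → A → ℝ} {s : S} {a : A}
    (hP : (∀ s', 0 ≤ P s a s') ∧ ∑ s', P s a s' = 1) (hγ : 0 ≤ γ)
    (hV : ∀ s', |(b s' + ∑ a', μ s' a' * Q s' a') - (b' s' + ∑ a', ν s' a' * Q' s' a')| ≤ C) :
    |softBellman r P γ b μ Q s a - softBellman r P γ b' ν Q' s a| ≤ γ * C := by
  simp only [softBellman, add_sub_add_left_eq_sub, ← mul_sub, ← sum_sub_distrib]
  rw [abs_mul, abs_of_nonneg hγ]
  exact mul_le_mul_of_nonneg_left (abs_sum_mul_le_of_stochastic hP hV) hγ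

/-- The bonus is linear in the policy, so both values are averages of `α * g + Q`. -/
lemma abs_regularizedValue_sub_le {μ ν g Q Q' : A → ℝ} {α C D : ℝ}
    (hμ : (∀ a, 0 ≤ μ a) ∧ ∑ a, μ a = 1) (hQ : ∀ a, |Q a - Q' a| ≤ D)
    (hg : ∀ a, |α * g a + Q' a| ≤ C) :
    |(α * ∑ a, μ a * g a + ∑ a, μ a * Q a) - (α * ∑ a, ν a * g a + ∑ a, ν a * Q' a)|
      ≤ D + (∑ a, |μ a - ν a|) * C := by
  have hlin : ∀ (w R : A → ℝ), α * ∑ a, w a * g a + ∑ a, w a * R a = ∑ a, w a * (α * g a + R a) :=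
    fun w R => by simp only [mul_sum, mul_add, sum_add_distrib, mul_left_comm]
  rw [hlin, hlin]
  exact abs_sum_mul_sub_sum_mul_le hμ (fun a => by simpa using hQ a) hg

lemma abs_apply_le_norm (f : S → A → ℝ) (s : S) (a : A) : |f s a| ≤ ‖f‖ :=
  (norm_le_pi_norm (f s) a).trans (norm_le_pi_norm f s)

lemma norm_le_of_forall_abs_le [Nonempty S] [Nonempty A] {f : S → A → ℝ} {C : ℝ}
    (h : ∀ s a, |f s a| ≤ C) : ‖f‖ ≤ C :=
  (pi_norm_le_iff_of_nonempty f).2 fun s => (pi_norm_le_iff_of_nonempty (f s)).2 (h s)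

end SoftBellman

theorem soft_Q_closeness_general {SS AA : Type} [Fintype SS] [Fintype AA]
    (r : SS → AA → ℝ) (p : SS → AA → SS → ℝ) (π πt : SS → AA → ℝ)
    (α γ CR M δTV : ℝ)
    (hα : 0 ≤ α) (hγ0 : 0 ≤ γ) (hγ1 : γ < 1) (hδ : 0 ≤ δTV)
    (hp : ∀ s a, (∀ s', 0 ≤ p s a s') ∧ ∑ s', p s a s' = 1)
    (hπ : ∀ s, (∀ a, 0 ≤ π s a) ∧ ∑ a, π s a = 1)
    (hTV : ∀ s, (1 / 2) * ∑ a, |π s a - πt s a| ≤ δTV)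
    (hCR : ∀ s a, |Real.log (πt s a)| ≤ CR)
    (Qπ Qπt : SS → AA → ℝ)
    (hQπ : ∀ s a, Qπ s a = r s a + γ * ∑ s', p s a s' *
        ((α * ∑ a', π s' a' * (-Real.log (πt s' a'))) + ∑ a', π s' a' * Qπ s' a'))
    (hQπt : ∀ s a, Qπt s a = r s a + γ * ∑ s', p s a s' *
        ((α * ∑ a', πt s' a' * (-Real.log (πt s' a'))) + ∑ a', πt s' a' * Qπt s' a'))
    (hM : ∀ s a, |Qπt s a| ≤ M) :
    ∀ s a, |Qπ s a - Qπt s a| ≤ (2 * δTV / (1 - γ)) * (α * CR + γ * M) := by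
  intro s₀ a₀
  have : Nonempty SS := ⟨s₀⟩
  have : Nonempty AA := ⟨a₀⟩
  have hαCR : 0 ≤ α * CR := mul_nonneg hα ((abs_nonneg _).trans (hCR s₀ a₀))
  have hM0 : 0 ≤ M := (abs_nonneg _).trans (hM s₀ a₀)
  have hstep : ∀ s a, |Qπ s a - Qπt s a| ≤ γ * (‖Qπ - Qπt‖ + 2 * δTV * (α * CR + M)) := by
    intro s a
    rw [hQπ s a, hQπt s a]
    refine abs_softBellman_sub_softBellman_le (hp s a) hγ0 fun s' => ?_
    have hbonus : ∀ a', |α * (-Real.log (πt s' a')) + Qπt s' a'| ≤ α * CR + M := fun a' => by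
      refine (abs_add_le _ _).trans (add_le_add ?_ (hM s' a'))
      rw [abs_mul, abs_neg, abs_of_nonneg hα]
      exact mul_le_mul_of_nonneg_left (hCR s' a') hα
    refine (abs_regularizedValue_sub_le (hπ s') (abs_apply_le_norm (Qπ - Qπt) s') hbonus).trans ?_
    gcongr
    linarith [hTV s']
  have hnorm : ‖Qπ - Qπt‖ ≤ γ * (2 * δTV * (α * CR + M)) / (1 - γ) := by
    rw [le_div_iff₀ (sub_pos.2 hγ1)]
    linarith [norm_le_of_forall_abs_le (f := Qπ - Qπt) hstep]
  calc |Qπ s₀ a₀ - Qπt s₀ a₀| ≤ γ * (2 * δTV * (α * CR + M)) / (1 - γ) :=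
        (abs_apply_le_norm (Qπ - Qπt) s₀ a₀).trans hnorm
    _ ≤ (2 * δTV / (1 - γ)) * (α * CR + γ * M) := by
      rw [div_mul_eq_mul_div]
      gcongr ?_ / _
      nlinarith [mul_nonneg hδ hαCR]

/-- Soft Q-function closeness: let `Qπ` be the fixed point of the cross-entropy
regularized soft Bellman operator (bonus `−α log π̃` under policy `π`) and `Qπt` the
fixed point of the entropy-regularized soft Bellman operator under `π̃`. If the
statewise total variation between `π` and `π̃` is at most `δTV`, `|log π̃(a|s)| ≤ CR`,
and `|Qπt| ≤ M` (e.g. `M = R_max/(1−γ)`), then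
`‖Qπ − Qπt‖_∞ ≤ (2δTV/(1−γ)) (α CR + γ M)`. -/
theorem soft_Q_closeness {SS AA : Type} [Fintype SS] [Fintype AA]
    (r : SS → AA → ℝ) (p : SS → AA → SS → ℝ) (π πt : SS → AA → ℝ)
    (α γ CR M δTV : ℝ)
    (hα : 0 ≤ α) (hγ0 : 0 ≤ γ) (hγ1 : γ < 1) (hδ : 0 ≤ δTV)
    (hp : ∀ s a, (∀ s', 0 ≤ p s a s') ∧ ∑ s', p s a s' = 1)
    (hπ : ∀ s, (∀ a, 0 ≤ π s a) ∧ ∑ a, π s a = 1)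
    (hπt : ∀ s, (∀ a, 0 < πt s a) ∧ ∑ a, πt s a = 1)
    (hTV : ∀ s, (1 / 2) * ∑ a, |π s a - πt s a| ≤ δTV)
    (hCR : ∀ s a, |Real.log (πt s a)| ≤ CR)
    (Qπ Qπt : SS → AA → ℝ)
    (hQπ : ∀ s a, Qπ s a = r s a + γ * ∑ s', p s a s' *
        ((α * ∑ a', π s' a' * (-Real.log (πt s' a'))) + ∑ a', π s' a' * Qπ s' a'))
    (hQπt : ∀ s a, Qπt s a = r s a + γ * ∑ s', p s a s' *
        ((α * ∑ a', πt s' a' * (-Real.log (πt s' a'))) + ∑ a', πt s' a' * Qπt s' a'))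
    (hM : ∀ s a, |Qπt s a| ≤ M) :
    ∀ s a, |Qπ s a - Qπt s a| ≤ (2 * δTV / (1 - γ)) * (α * CR + γ * M) :=
  soft_Q_closeness_general r p π πt α γ CR M δTV hα hγ0 hγ1 hδ hp hπ hTV hCR Qπ Qπt hQπ hQπt hM
end
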